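/- arXiv:math/0406572 — 6 statements merged into one kernel-verified Lean document; each statement's English description precedes it below -/
import Mathlib

section
/- If h₁ : ℝ → ℝ and h₂ : ℝ → ℝ are real analytic functions and ψ : (0, +∞) → (0, +∞) is a C^∞ function that is flat at 0 (all derivatives tend to 0 as t → 0⁺) with h₁(t) = h₂(ψ(t)) for all t > 0, then h₁ is constant on ℝ. -/
open Set Filter Topology

/-- If h₁, h₂ are real analytic on ℝ and ψ : (0,∞) → (0,∞) is smooth and flat
at 0 (all derivatives tend to 0 as t → 0⁺) with h₁ = h₂ ∘ ψ on (0,∞),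
then h₁ is constant. -/
theorem analytic_first_integral_constant
    (h₁ h₂ ψ : ℝ → ℝ)
    (hh₁ : ∀ x : ℝ, AnalyticAt ℝ h₁ x)
    (hh₂ : ∀ x : ℝ, AnalyticAt ℝ h₂ x)
    (hψs : ContDiffOn ℝ (⊤ : ℕ∞) ψ (Ioi 0))
    (hψmaps : MapsTo ψ (Ioi 0) (Ioi 0))
    (hψflat : ∀ k : ℕ, Tendsto (iteratedDerivWithin k ψ (Ioi 0)) (nhdsWithin 0 (Ioi 0)) (nhds 0))
    (heq : ∀ t > (0 : ℝ), h₁ t = h₂ (ψ t)) :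
    ∀ s t : ℝ, h₁ s = h₁ t := by
  have hA₁ : AnalyticOnNhd ℝ h₁ univ := fun x _ => hh₁ x
  have hA₂ : AnalyticOnNhd ℝ h₂ univ := fun x _ => hh₂ x
  have hc₁ : ContDiff ℝ (⊤ : ℕ∞) h₁ := hA₁.contDiff
  have hc₂ : ContDiff ℝ (⊤ : ℕ∞) h₂ := hA₂.contDiff
  have hSopen : IsOpen (Ioi (0:ℝ)) := isOpen_Ioi
  have hSu : UniqueDiffOn ℝ (Ioi (0:ℝ)) := hSopen.uniqueDiffOn
  have hEq : EqOn h₁ (h₂ ∘ ψ) (Ioi (0:ℝ)) := fun x hx => heq x hx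
  have hψ0 : Tendsto ψ (𝓝[>] (0:ℝ)) (𝓝 0) := by
    simpa using hψflat 0
  -- all iterated derivatives of h₁ at 0 of order ≥ 1 vanish
  have key : ∀ n : ℕ, 1 ≤ n → iteratedFDeriv ℝ n h₁ 0 = 0 := by
    intro n hn
    set C : ℝ :=
      ((Finset.range (n+1)).sup' ⟨0, by simp⟩ fun i => ‖iteratedFDeriv ℝ i h₂ 0‖) + 1 with hCdef
    have hCle : ∀ i, i ≤ n → ‖iteratedFDeriv ℝ i h₂ 0‖ < C := by
      intro i hi
      have : ‖iteratedFDeriv ℝ i h₂ 0‖ ≤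
          (Finset.range (n+1)).sup' ⟨0, by simp⟩ fun i => ‖iteratedFDeriv ℝ i h₂ 0‖ :=
        Finset.le_sup' (fun j => ‖iteratedFDeriv ℝ j h₂ 0‖)
          (Finset.mem_range.2 (Nat.lt_succ_of_le hi))
      linarith
    have hCpos : (0:ℝ) < C := lt_of_le_of_lt (norm_nonneg (iteratedFDeriv ℝ 0 h₂ 0))
      (hCle 0 (Nat.zero_le _))
    have hCev : ∀ᶠ x in 𝓝[>] (0:ℝ), ∀ i ∈ Set.Iic n, ‖iteratedFDeriv ℝ i h₂ (ψ x)‖ ≤ C := by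
      rw [eventually_all_finite (Set.finite_Iic n)]
      intro i hi
      have hcont : ContinuousAt (iteratedFDeriv ℝ i h₂) 0 :=
        (hc₂.continuous_iteratedFDeriv (by exact_mod_cast le_top)).continuousAt
      have ht : Tendsto (fun x => ‖iteratedFDeriv ℝ i h₂ (ψ x)‖) (𝓝[>] (0:ℝ))
          (𝓝 ‖iteratedFDeriv ℝ i h₂ 0‖) := ((hcont.tendsto.comp hψ0).norm)
      exact (ht.eventually_lt_const (hCle i hi)).mono fun x hx => le_of_lt hx
    have hT : Tendsto (iteratedFDeriv ℝ n h₁) (𝓝[>] (0:ℝ)) (𝓝 0) := by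
      rw [NormedAddCommGroup.tendsto_nhds_zero]
      intro ε hε
      set D : ℝ := min (ε / (2 * n.factorial * C)) 1 with hDdef
      have hDpos : 0 < D := lt_min (by positivity) one_pos
      have hDle : D ≤ 1 := min_le_right _ _
      have hbound : (n.factorial : ℝ) * C * D ^ n < ε := by
        have h1 : D ^ n ≤ D ^ 1 := pow_le_pow_of_le_one hDpos.le hDle hn
        have h2 : (n.factorial : ℝ) * C * D ^ n ≤ (n.factorial : ℝ) * C * D := by
          simpa using mul_le_mul_of_nonneg_left h1 (by positivity : (0:ℝ) ≤ (n.factorial : ℝ) * C)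
        have h3 : (n.factorial : ℝ) * C * D ≤ (n.factorial : ℝ) * C * (ε / (2 * n.factorial * C)) := by
          gcongr
          exact min_le_left _ _
        have h4 : (n.factorial : ℝ) * C * (ε / (2 * n.factorial * C)) = ε / 2 := by
          have : (n.factorial : ℝ) ≠ 0 := Nat.cast_ne_zero.2 n.factorial_ne_zero
          field_simp
        exact lt_of_le_of_lt (h2.trans (h3.trans h4.le)) (by linarith)
      have hDev : ∀ᶠ x in 𝓝[>] (0:ℝ), ∀ i ∈ Set.Icc 1 n,
          ‖iteratedFDerivWithin ℝ i ψ (Ioi 0) x‖ ≤ D ^ i := by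
        rw [eventually_all_finite (Set.finite_Icc 1 n)]
        intro i hi
        have ht : Tendsto (fun x => ‖iteratedDerivWithin i ψ (Ioi 0) x‖) (𝓝[>] (0:ℝ))
            (𝓝 0) := by simpa using (hψflat i).norm
        refine (ht.eventually_lt_const (pow_pos hDpos i)).mono fun x hx => ?_
        rw [norm_iteratedFDerivWithin_eq_norm_iteratedDerivWithin]
        exact le_of_lt hx
      filter_upwards [hCev, hDev, self_mem_nhdsWithin] with x hCx hDx hx
      have e1 : iteratedFDeriv ℝ n h₁ x = iteratedFDerivWithin ℝ n h₁ (Ioi 0) x :=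
        (iteratedFDerivWithin_of_isOpen n hSopen hx).symm
      have e2 : iteratedFDerivWithin ℝ n h₁ (Ioi 0) x
          = iteratedFDerivWithin ℝ n (h₂ ∘ ψ) (Ioi 0) x :=
        iteratedFDerivWithin_congr hEq hx n
      rw [e1, e2]
      refine lt_of_le_of_lt ?_ hbound
      refine norm_iteratedFDerivWithin_comp_le (t := univ) hc₂.contDiffOn hψs (by exact_mod_cast le_top)
        uniqueDiffOn_univ hSu (mapsTo_univ ψ _) hx ?_ ?_
      · intro i hi
        rw [iteratedFDerivWithin_univ]
        exact hCx i hi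
      · intro i h1i hin
        exact hDx i ⟨h1i, hin⟩
    have hcont : Tendsto (iteratedFDeriv ℝ n h₁) (𝓝[>] (0:ℝ)) (𝓝 (iteratedFDeriv ℝ n h₁ 0)) :=
      ((hc₁.continuous_iteratedFDeriv (by exact_mod_cast le_top)).continuousAt.tendsto).mono_left nhdsWithin_le_nhds
    exact tendsto_nhds_unique hcont hT
  -- h₁ is locally constant near 0
  obtain ⟨p, r, hp⟩ := hh₁ 0
  have hev : h₁ =ᶠ[𝓝 (0:ℝ)] fun _ => h₁ 0 := by
    have hball : ∀ y ∈ EMetric.ball (0:ℝ) r, h₁ y = h₁ 0 := by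
      intro y hy
      have hs := hp.hasSum_iteratedFDeriv hy
      have hsingle : HasSum (fun n => ((n.factorial : ℝ))⁻¹ • iteratedFDeriv ℝ n h₁ 0 fun _ => y)
          ((((0).factorial : ℝ))⁻¹ • iteratedFDeriv ℝ 0 h₁ 0 fun _ => y) := by
        refine hasSum_single 0 fun n hn => ?_
        rw [key n (Nat.one_le_iff_ne_zero.2 hn)]
        simp
      have := hs.unique hsingle
      simpa using this
    have hmem : EMetric.ball (0:ℝ) r ∈ 𝓝 (0:ℝ) := EMetric.ball_mem_nhds _ hp.r_pos
    exact Filter.eventuallyEq_of_mem hmem hball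
  have hconst : h₁ = fun _ => h₁ 0 :=
    hA₁.eq_of_eventuallyEq analyticOnNhd_const hev
  intro s t
  rw [congrFun hconst s, congrFun hconst t]
end

section
/- If h₁ : ℝ → ℝ and h₂ : ℝ → ℝ are real analytic and satisfy h₁(t) = h₂(t·exp(−1/t)) for all t > 0, then both h₁ and h₂ are constant. -/
open Set Filter Topology

/-- If h₁, h₂ are real analytic on ℝ and h₁(t) = h₂(t·exp(−1/t)) for all
t > 0, then both h₁ and h₂ are constant. -/
theorem analytic_pair_constant
    (h₁ h₂ : ℝ → ℝ)
    (hh₁ : ∀ x : ℝ, AnalyticAt ℝ h₁ x)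
    (hh₂ : ∀ x : ℝ, AnalyticAt ℝ h₂ x)
    (heq : ∀ t > (0 : ℝ), h₁ t = h₂ (t * Real.exp (-1 / t))) :
    (∀ s t : ℝ, h₁ s = h₁ t) ∧ (∀ s t : ℝ, h₂ s = h₂ t) := by
  set ψ : ℝ → ℝ := fun t => t * Real.exp (-1 / t) with hψdef
  have hmem : ∀ᶠ t in 𝓝[>] (0:ℝ), t ∈ Ioi (0:ℝ) := self_mem_nhdsWithin
  -- exp(-1/t) → 0 as t → 0+
  have hexp : Tendsto (fun t : ℝ => Real.exp (-1 / t)) (𝓝[>] 0) (𝓝 0) := by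
    have h1 : Tendsto (fun t : ℝ => -1 / t) (𝓝[>] 0) atBot := by
      have := tendsto_neg_atTop_atBot.comp (tendsto_inv_nhdsGT_zero (𝕜 := ℝ))
      apply this.congr
      intro t
      simp [Function.comp, neg_div]
    exact Real.tendsto_exp_atBot.comp h1
  -- ψ → 0 as t → 0+
  have hψ0 : Tendsto ψ (𝓝[>] 0) (𝓝 0) := by
    have ht : Tendsto (fun t : ℝ => t) (𝓝[>] 0) (𝓝 0) :=
      tendsto_id.mono_left nhdsWithin_le_nhds
    simpa using ht.mul hexp
  -- for every m, exp(-1/t) / t^m → 0 as t → 0+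
  have hsmall : ∀ m : ℕ, Tendsto (fun t : ℝ => Real.exp (-1 / t) / t ^ m) (𝓝[>] 0) (𝓝 0) := by
    intro m
    have h1 := (Real.tendsto_pow_mul_exp_neg_atTop_nhds_zero m).comp tendsto_inv_nhdsGT_zero
    apply h1.congr'
    filter_upwards [hmem] with t ht
    have ht0 : (0:ℝ) < t := ht
    rw [Function.comp]
    rw [show -(1:ℝ)/t = -(t⁻¹) by ring]
    rw [inv_pow]
    field_simp
  -- h₁ 0 = h₂ 0
  have hc : h₁ 0 = h₂ 0 := by
    have l1 : Tendsto h₁ (𝓝[>] (0:ℝ)) (𝓝 (h₁ 0)) :=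
      (hh₁ 0).continuousAt.tendsto.mono_left nhdsWithin_le_nhds
    have l2 : Tendsto (fun t => h₂ (ψ t)) (𝓝[>] (0:ℝ)) (𝓝 (h₂ 0)) :=
      (hh₂ 0).continuousAt.tendsto.comp hψ0
    refine tendsto_nhds_unique_of_eventuallyEq l1 l2 ?_
    filter_upwards [hmem] with t ht using heq t ht
  set c := h₂ 0 with hcdef
  set f : ℝ → ℝ := fun t => h₁ t - c with hfdef
  have fa : AnalyticAt ℝ f 0 := (hh₁ 0).sub analyticAt_const
  -- f vanishes identically near 0
  have horder : ∀ᶠ z in 𝓝 (0:ℝ), f z = 0 := by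
    by_contra hne
    obtain ⟨n, g, hg, hg0, hfg⟩ := fa.exists_eventuallyEq_pow_smul_nonzero_iff.mpr hne
    obtain ⟨C, hC⟩ := ((hh₂ 0).differentiableAt).isBigO_sub.bound
    have hgev : ∀ᶠ t in 𝓝 (0:ℝ), |g 0| / 2 < |g t| := by
      have hcont : Tendsto (fun t => |g t|) (𝓝 0) (𝓝 |g 0|) :=
        (continuous_abs.tendsto _).comp hg.continuousAt
      exact hcont.eventually (eventually_gt_nhds (half_lt_self (abs_pos.mpr hg0)))
    have hexpev : ∀ᶠ t in 𝓝[>] (0:ℝ), Real.exp (-1 / t) / t ^ n ≤ 1 := by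
      filter_upwards [(hsmall n).eventually (eventually_le_nhds one_pos)] with t ht using ht
    have key : ∀ᶠ t in 𝓝[>] (0:ℝ), |g 0| / 2 ≤ C * t := by
      filter_upwards [hmem, hfg.filter_mono nhdsWithin_le_nhds,
        hgev.filter_mono nhdsWithin_le_nhds, hψ0.eventually hC, hexpev] with t ht hft hgt hCt hexpt
      have ht0 : (0 : ℝ) < t := ht
      have htn : (0 : ℝ) < t ^ n := pow_pos ht0 n
      have hexp_le : Real.exp (-1 / t) ≤ t ^ n := by
        rw [div_le_one htn] at hexpt; exact hexpt
      -- |f t| ≥ t^n * (|g 0|/2)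
      have hlb : t ^ n * (|g 0| / 2) ≤ |f t| := by
        rw [hft]
        simp only [sub_zero, smul_eq_mul, abs_mul, abs_pow, abs_of_pos ht0]
        exact mul_le_mul_of_nonneg_left hgt.le htn.le
      -- |f t| ≤ C * (t * exp(-1/t))
      have hub : |f t| ≤ C * (t * Real.exp (-1 / t)) := by
        have hft2 : f t = h₂ (ψ t) - c := by
          simp only [hfdef]; rw [heq t ht]
        rw [hft2]
        have := hCt
        simp only [sub_zero, Real.norm_eq_abs] at this
        calc |h₂ (ψ t) - c| ≤ C * |ψ t| := this
          _ = C * (t * Real.exp (-1 / t)) := by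
              rw [abs_of_pos (mul_pos ht0 (Real.exp_pos _))]
      have hC0 : 0 ≤ C := by
        by_contra hCneg
        push_neg at hCneg
        have : |f t| < 0 := lt_of_le_of_lt hub
          (mul_neg_of_neg_of_pos hCneg (mul_pos ht0 (Real.exp_pos _)))
        exact absurd (abs_nonneg _) (not_le.mpr this)
      have : t ^ n * (|g 0| / 2) ≤ C * t * t ^ n := by
        calc t ^ n * (|g 0| / 2) ≤ |f t| := hlb
          _ ≤ C * (t * Real.exp (-1 / t)) := hub
          _ ≤ C * (t * t ^ n) := by
              apply mul_le_mul_of_nonneg_left _ hC0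
              exact mul_le_mul_of_nonneg_left hexp_le ht0.le
          _ = C * t * t ^ n := by ring
      have hfin : |g 0| / 2 * t ^ n ≤ C * t * t ^ n := by nlinarith [this]
      exact le_of_mul_le_mul_right hfin htn
    have hlim : Tendsto (fun t : ℝ => C * t) (𝓝[>] 0) (𝓝 0) := by
      have ht : Tendsto (fun t : ℝ => t) (𝓝[>] 0) (𝓝 0) :=
        tendsto_id.mono_left nhdsWithin_le_nhds
      simpa using ht.const_mul C
    have : |g 0| / 2 ≤ 0 := ge_of_tendsto hlim key
    have : (0:ℝ) < |g 0| / 2 := half_pos (abs_pos.mpr hg0)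
    linarith
  have hev : ∀ᶠ z in 𝓝 (0:ℝ), h₁ z = c := by
    filter_upwards [horder] with z hz
    simpa [hfdef, sub_eq_zero] using hz
  -- h₁ is constant
  have h₁const : EqOn h₁ (fun _ => c) (univ : Set ℝ) := by
    apply AnalyticOnNhd.eqOn_of_preconnected_of_frequently_eq
      (fun x _ => hh₁ x) (fun x _ => analyticAt_const) isPreconnected_univ (mem_univ (0:ℝ))
    exact ((hev.filter_mono nhdsWithin_le_nhds).frequently)
  -- h₂ is constant
  have hψne : Tendsto ψ (𝓝[>] (0:ℝ)) (𝓝[≠] (0:ℝ)) := by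
    rw [tendsto_nhdsWithin_iff]
    refine ⟨hψ0, ?_⟩
    filter_upwards [hmem] with t ht
    have : (0:ℝ) < ψ t := mul_pos ht (Real.exp_pos _)
    exact fun h => absurd h (by simp [this.ne'])
  have hfreq₂ : ∃ᶠ z in 𝓝[≠] (0:ℝ), h₂ z = c := by
    apply hψne.frequently
    apply Eventually.frequently
    filter_upwards [hmem] with t ht
    rw [← heq t ht]
    exact h₁const (mem_univ t)
  have h₂const : EqOn h₂ (fun _ => c) (univ : Set ℝ) :=
    AnalyticOnNhd.eqOn_of_preconnected_of_frequently_eq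
      (fun x _ => hh₂ x) (fun x _ => analyticAt_const) isPreconnected_univ (mem_univ (0:ℝ)) hfreq₂
  constructor
  · intro s t; rw [h₁const (mem_univ s), h₁const (mem_univ t)]
  · intro s t; rw [h₂const (mem_univ s), h₂const (mem_univ t)]
end

section
/- Suppose h₁ is real analytic on (−1, 2), h₂ is real analytic on (−1, ψ(2)) with ψ(t) = t·exp(−1/t), and h₁(t) = h₂(ψ(t)) for all t ∈ (1, 2). Then h₁ is constant on (−1, 2) and h₂ is constant on (−1, ψ(2)). -/
/-!
Since `ψ(t) = t e^{-1/t}` is flat at `0⁺`, any function of the form `h ∘ ψ` with `h`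
differentiable at `0` agrees with `h 0` up to `o(tⁿ)` for every `n`. By the identity theorem
`h₁ = h₂ ∘ ψ` on all of `(0, 2)`, so the analytic function `h₁ - h₂ 0` vanishes to infinite
order at `0`, hence `h₁` is constant. Then `h₂ = h₂ 0` at the points `ψ t`, which accumulate
at `0`, so `h₂` is constant too.
-/

open Set Filter

noncomputable def psi (t : ℝ) : ℝ := t * Real.exp (-1 / t)

open Topology Asymptotics

theorem AnalyticAt.eventuallyEq_zero_of_isLittleO_pow {E : Type*} [NormedAddCommGroup E]
    [NormedSpace ℝ E] {f : ℝ → E} {x : ℝ} (hf : AnalyticAt ℝ f x)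
    (hflat : ∀ n : ℕ, f =o[𝓝[>] x] fun t => (t - x) ^ n) : f =ᶠ[𝓝 x] 0 := by
  by_contra hne
  obtain ⟨g, hg, hgx, hfg⟩ := hf.analyticOrderAt_ne_top.1 (mt analyticOrderAt_eq_top.1 hne)
  have hg_zero : Tendsto g (𝓝[>] x) (𝓝 0) := by
    refine (hflat (analyticOrderNatAt f x)).tendsto_inv_smul_nhds_zero.congr' ?_
    filter_upwards [self_mem_nhdsWithin, nhdsWithin_le_nhds hfg] with t (ht : x < t) hft
    rw [hft, smul_smul, inv_mul_cancel₀ (pow_ne_zero _ (sub_pos.2 ht).ne'), one_smul]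
  exact hgx (tendsto_nhds_unique (hg.continuousAt.tendsto.mono_left nhdsWithin_le_nhds) hg_zero)

lemma exp_neg_one_div_isLittleO_pow (n : ℕ) :
    (fun t => Real.exp (-1 / t)) =o[𝓝[>] 0] (· ^ n) := by
  refine (isLittleO_iff_tendsto' ?_).2 ?_
  · filter_upwards [self_mem_nhdsWithin] with t (ht : 0 < t) h
    exact absurd h (pow_ne_zero _ ht.ne')
  · refine ((Real.tendsto_pow_mul_exp_neg_atTop_nhds_zero n).comp
      tendsto_inv_nhdsGT_zero).congr fun t => ?_
    simp [div_eq_mul_inv, mul_comm, inv_pow]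

lemma psi_pos {t : ℝ} (ht : 0 < t) : 0 < psi t :=
  mul_pos ht (Real.exp_pos _)

lemma psi_lt_psi {a b : ℝ} (ha : 0 < a) (hab : a < b) : psi a < psi b := by
  refine mul_lt_mul hab (Real.exp_le_exp.2 ?_) (Real.exp_pos _) (ha.trans hab).le
  rw [neg_div, neg_div, neg_le_neg_iff]
  exact one_div_le_one_div_of_le ha hab.le

lemma analyticAt_psi {t : ℝ} (ht : t ≠ 0) : AnalyticAt ℝ psi t :=
  analyticAt_id.mul (analyticAt_rexp.comp (analyticAt_const.div analyticAt_id ht))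

lemma psi_isLittleO_pow (n : ℕ) : psi =o[𝓝[>] 0] (· ^ n) := by
  have hid : (fun t : ℝ => t) =O[𝓝[>] 0] fun _ => (1 : ℝ) :=
    (tendsto_id.mono_left nhdsWithin_le_nhds).isBigO_one ℝ
  exact (hid.mul_isLittleO (exp_neg_one_div_isLittleO_pow n)).congr_right fun _ => one_mul _

lemma tendsto_psi_nhdsGT_zero : Tendsto psi (𝓝[>] 0) (𝓝[>] 0) :=
  tendsto_nhdsWithin_iff.2
    ⟨(isLittleO_one_iff ℝ).1 (by simpa using psi_isLittleO_pow 0),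
      eventually_mem_nhdsWithin.mono fun _ => psi_pos⟩

lemma eventuallyEq_const_of_eventuallyEq_comp_psi {E : Type*} [NormedAddCommGroup E]
    [NormedSpace ℝ E] {f g : ℝ → E} (hf : AnalyticAt ℝ f 0) (hg : DifferentiableAt ℝ g 0)
    (hfg : f =ᶠ[𝓝[>] 0] g ∘ psi) : f =ᶠ[𝓝 0] fun _ => g 0 := by
  have hflat : (fun t => f t - g 0) =ᶠ[𝓝 0] 0 := by
    refine (hf.sub analyticAt_const).eventuallyEq_zero_of_isLittleO_pow fun n => ?_
    have hg_lip :=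
      hg.isBigO_sub.comp_tendsto (tendsto_psi_nhdsGT_zero.mono_right nhdsWithin_le_nhds)
    have hψ : ((· - 0) ∘ psi) =o[𝓝[>] 0] (· ^ n) :=
      (psi_isLittleO_pow n).congr_left fun _ => (sub_zero _).symm
    refine (hg_lip.trans_isLittleO hψ).congr' ?_ (by simp)
    filter_upwards [hfg] with t ht
    simp [ht]
  exact hflat.mono fun _ => sub_eq_zero.1

/-- If h₁ is real analytic on (−1,2), h₂ is real analytic on (−1, ψ(2)),
and h₁ = h₂ ∘ ψ on (1,2), then h₁ is constant on (−1,2) and h₂ is constant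
on (−1, ψ(2)). -/
theorem analytic_first_integrals_constant_on_intervals
    (h₁ h₂ : ℝ → ℝ)
    (hh₁ : ∀ x ∈ Ioo (-1 : ℝ) 2, AnalyticAt ℝ h₁ x)
    (hh₂ : ∀ x ∈ Ioo (-1 : ℝ) (psi 2), AnalyticAt ℝ h₂ x)
    (heq : ∀ t ∈ Ioo (1 : ℝ) 2, h₁ t = h₂ (psi t)) :
    (∀ s ∈ Ioo (-1 : ℝ) 2, ∀ t ∈ Ioo (-1 : ℝ) 2, h₁ s = h₁ t) ∧
    (∀ s ∈ Ioo (-1 : ℝ) (psi 2), ∀ t ∈ Ioo (-1 : ℝ) (psi 2), h₂ s = h₂ t) := by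
  have h₀₁ : (0 : ℝ) ∈ Ioo (-1) 2 := by norm_num
  have h₀₂ : (0 : ℝ) ∈ Ioo (-1) (psi 2) := ⟨by norm_num, psi_pos two_pos⟩
  have h_comp : EqOn h₁ (h₂ ∘ psi) (Ioo 0 2) := by
    refine AnalyticOnNhd.eqOn_of_preconnected_of_eventuallyEq
      (fun x hx => hh₁ x ⟨by linarith [hx.1], hx.2⟩)
      (fun x hx => (hh₂ _ ⟨by linarith [psi_pos hx.1], psi_lt_psi hx.1 hx.2⟩).comp
        (analyticAt_psi hx.1.ne'))
      isPreconnected_Ioo (z₀ := 3 / 2) (by norm_num) ?_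
    filter_upwards [Ioo_mem_nhds (by norm_num : (1 : ℝ) < 3 / 2) (by norm_num : (3 / 2 : ℝ) < 2)]
      using heq
  have h_comp_near_zero : ∀ᶠ t in 𝓝[>] 0, h₁ t = (h₂ ∘ psi) t :=
    eventually_of_mem (Ioo_mem_nhdsGT two_pos) h_comp
  have h₁_const : EqOn h₁ (fun _ => h₂ 0) (Ioo (-1) 2) :=
    AnalyticOnNhd.eqOn_of_preconnected_of_eventuallyEq hh₁ (fun _ _ => analyticAt_const)
      isPreconnected_Ioo h₀₁ (eventuallyEq_const_of_eventuallyEq_comp_psi (hh₁ 0 h₀₁)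
        (hh₂ 0 h₀₂).differentiableAt h_comp_near_zero)
  have h₂_const : EqOn h₂ (fun _ => h₂ 0) (Ioo (-1) (psi 2)) := by
    refine AnalyticOnNhd.eqOn_of_preconnected_of_frequently_eq hh₂ (fun _ _ => analyticAt_const)
      isPreconnected_Ioo h₀₂ ((tendsto_psi_nhdsGT_zero.mono_right (nhdsGT_le_nhdsNE 0)).frequently
        (Eventually.frequently ?_))
    filter_upwards [h_comp_near_zero, Ioo_mem_nhdsGT two_pos] with t ht ht₀₂
    rw [← Function.comp_apply (f := h₂), ← ht, h₁_const ⟨by linarith [ht₀₂.1], ht₀₂.2⟩]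
  exact ⟨fun s hs t ht => (h₁_const hs).trans (h₁_const ht).symm,
    fun s hs t ht => (h₂_const hs).trans (h₂_const ht).symm⟩
end

section
/- If h₂ is real analytic at 0 with h₂(0) = c and ψ(t) = t·exp(−1/t), then the composition t ↦ h₂(ψ(t)) − c, defined for small t > 0, together with all its derivatives, tends to 0 as t → 0⁺; in particular, if a real analytic function h₁ on a neighborhood of 0 agrees with h₂ ∘ ψ on (0, δ), then all derivatives of h₁ vanish at 0, so h₁ is constant near 0. -/
open Set Filter

private lemma myContAt {f : ℝ → ℝ} {x : ℝ} (hf : ContDiffAt ℝ (⊤ : ℕ∞) f x) (n : ℕ) :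
    ContinuousAt (iteratedDeriv n f) x := by
  obtain ⟨u, hu, hfu⟩ := hf.contDiffOn (m := (n : ℕ∞)) (by exact_mod_cast le_top) (by simp)
  have hvx : x ∈ interior u := mem_interior_iff_mem_nhds.2 hu
  have hopen : IsOpen (interior u) := isOpen_interior
  have hfv : ContDiffOn ℝ n f (interior u) := hfu.mono interior_subset
  have hcont : ContinuousOn (iteratedDerivWithin n f (interior u)) (interior u) :=
    hfv.continuousOn_iteratedDerivWithin le_rfl hopen.uniqueDiffOn
  have heq : ∀ y ∈ interior u, iteratedDerivWithin n f (interior u) y = iteratedDeriv n f y := by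
    intro y hy
    rw [iteratedDerivWithin_eq_iteratedFDerivWithin, iteratedDeriv_eq_iteratedFDeriv,
      iteratedFDerivWithin_of_isOpen n hopen hy]
  exact (hcont.congr (fun y hy => (heq y hy).symm)).continuousAt (hopen.mem_nhds hvx)

private lemma iteratedDeriv_zero_fun (n : ℕ) (x : ℝ) :
    iteratedDeriv n (fun _ : ℝ => (0 : ℝ)) x = 0 := by
  induction n generalizing x with
  | zero => simp
  | succ m ih =>
    rw [iteratedDeriv_succ]
    have : iteratedDeriv m (fun _ : ℝ => (0 : ℝ)) = fun _ => (0 : ℝ) := funext fun y => ih y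
    rw [this]
    simp

/-- If h₂ is real analytic at 0 with h₂(0) = c, then h₂ ∘ ψ − c and all its
derivatives tend to 0 as t → 0⁺; consequently, if a real analytic h₁ agrees
with h₂ ∘ ψ on (0, δ), then all derivatives (of order ≥ 1) of h₁ vanish at 0
and h₁ is constant near 0. -/
theorem composition_flat_and_h1_constant
    (h₂ : ℝ → ℝ) (c : ℝ) (hh₂ : AnalyticAt ℝ h₂ 0) (hc : h₂ 0 = c) :
    (∀ n : ℕ,
      Tendsto (iteratedDeriv n (fun t => h₂ (psi t) - c))
        (nhdsWithin 0 (Ioi 0)) (nhds 0)) ∧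
    ∀ (h₁ : ℝ → ℝ), AnalyticAt ℝ h₁ 0 →
      (∃ δ > (0 : ℝ), ∀ t ∈ Ioo (0 : ℝ) δ, h₁ t = h₂ (psi t)) →
      (∀ n : ℕ, 1 ≤ n → iteratedDeriv n h₁ 0 = 0) ∧
      (∀ᶠ t in nhds (0 : ℝ), h₁ t = h₁ 0) := by
  -- The smooth glued function
  set F : ℝ → ℝ := fun t => h₂ (t * expNegInvGlue t) - c with hFdef
  have hΨ : ContDiff ℝ (⊤ : ℕ∞) (fun t : ℝ => t * expNegInvGlue t) :=
    contDiff_id.mul expNegInvGlue.contDiff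
  have hΨ0 : (0 : ℝ) * expNegInvGlue 0 = 0 := by simp
  have hF : ContDiffAt ℝ (⊤ : ℕ∞) F 0 := by
    have h2c : ContDiffAt ℝ (⊤ : ℕ∞) h₂ ((0 : ℝ) * expNegInvGlue 0) := by
      rw [hΨ0]; exact hh₂.contDiffAt
    exact (h2c.comp 0 hΨ.contDiffAt).sub contDiffAt_const
  -- F = h₂∘psi − c on Ioi 0
  have hFpsi : ∀ t ∈ Ioi (0 : ℝ), F t = h₂ (psi t) - c := by
    intro t ht
    have : expNegInvGlue t = Real.exp (-1 / t) := by
      rw [expNegInvGlue, if_neg (not_le.2 ht), neg_div, one_div]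
    simp [hFdef, psi, this]
  -- F = 0 on Iic 0
  have hFneg : ∀ t ≤ (0 : ℝ), F t = 0 := by
    intro t ht
    simp [hFdef, expNegInvGlue.zero_of_nonpos ht, hc]
  -- iterated derivatives of F vanish on Iio 0
  have hderneg : ∀ n : ℕ, ∀ t < (0 : ℝ), iteratedDeriv n F t = 0 := by
    intro n t ht
    have hev : F =ᶠ[nhds t] fun _ => (0 : ℝ) := by
      filter_upwards [Iio_mem_nhds ht] with y hy
      exact hFneg y (le_of_lt hy)
    rw [hev.iteratedDeriv_eq n, iteratedDeriv_zero_fun]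
  -- iterated derivatives of F vanish at 0
  have hder0 : ∀ n : ℕ, iteratedDeriv n F 0 = 0 := by
    intro n
    have hcont := myContAt hF n
    have h1 : Tendsto (iteratedDeriv n F) (nhdsWithin 0 (Iio 0)) (nhds (iteratedDeriv n F 0)) :=
      hcont.continuousWithinAt.tendsto
    have h2 : Tendsto (iteratedDeriv n F) (nhdsWithin 0 (Iio 0)) (nhds 0) := by
      apply Tendsto.congr' _ tendsto_const_nhds
      filter_upwards [self_mem_nhdsWithin] with t ht
      exact (hderneg n t ht).symm
    exact tendsto_nhds_unique h1 h2
  -- the key tendsto statement for F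
  have hFtendsto : ∀ n : ℕ, Tendsto (iteratedDeriv n F) (nhdsWithin 0 (Ioi 0)) (nhds 0) := by
    intro n
    have hcont := myContAt hF n
    have := hcont.continuousWithinAt (s := Ioi 0) |>.tendsto
    rwa [hder0 n] at this
  -- iterated derivatives of h₂∘psi − c agree with those of F on Ioi 0
  have hagree : ∀ n : ℕ, ∀ t ∈ Ioi (0 : ℝ),
      iteratedDeriv n (fun t => h₂ (psi t) - c) t = iteratedDeriv n F t := by
    intro n t ht
    have hev : (fun t => h₂ (psi t) - c) =ᶠ[nhds t] F := by
      filter_upwards [Ioi_mem_nhds ht] with y hy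
      exact (hFpsi y hy).symm
    exact hev.iteratedDeriv_eq n
  constructor
  · intro n
    refine (hFtendsto n).congr' ?_
    filter_upwards [self_mem_nhdsWithin] with t ht
    exact (hagree n t ht).symm
  · intro h₁ hh₁ ⟨δ, hδ, hδeq⟩
    have hders : ∀ n : ℕ, 1 ≤ n → iteratedDeriv n h₁ 0 = 0 := by
      intro n hn
      obtain ⟨m, rfl⟩ : ∃ m, n = m + 1 := ⟨n - 1, (Nat.succ_pred_eq_of_pos hn).symm⟩
      have hcont := myContAt hh₁.contDiffAt (m + 1)
      -- on Ioo 0 δ, h₁ = F + c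
      have hFc : ∀ t ∈ Ioo (0 : ℝ) δ, h₁ t = F t + c := by
        intro t ht
        rw [hδeq t ht, hFpsi t ht.1]
        ring
      -- the (m+1)-st derivatives of h₁ and F agree on Ioo 0 δ
      have hagree1 : ∀ t ∈ Ioo (0 : ℝ) δ,
          iteratedDeriv (m + 1) h₁ t = iteratedDeriv (m + 1) F t := by
        intro t ht
        have hev : h₁ =ᶠ[nhds t] fun s => F s + c := by
          filter_upwards [Ioo_mem_nhds ht.1 ht.2] with y hy
          exact hFc y hy
        rw [hev.iteratedDeriv_eq (m + 1)]
        rw [iteratedDeriv_succ', iteratedDeriv_succ']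
        congr 1
        funext y
        exact deriv_add_const c
      have h1 : Tendsto (iteratedDeriv (m + 1) h₁) (nhdsWithin 0 (Ioi 0))
          (nhds (iteratedDeriv (m + 1) h₁ 0)) := hcont.continuousWithinAt.tendsto
      have h2 : Tendsto (iteratedDeriv (m + 1) h₁) (nhdsWithin 0 (Ioi 0)) (nhds 0) := by
        refine (hFtendsto (m + 1)).congr' ?_
        filter_upwards [Ioo_mem_nhdsGT_of_mem (Set.left_mem_Ico.2 hδ)] with t ht
        exact (hagree1 t ht).symm
      exact tendsto_nhds_unique h1 h2
    refine ⟨hders, ?_⟩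
    obtain ⟨p, hp⟩ := hh₁
    obtain ⟨r, hpr⟩ := hp
    filter_upwards [EMetric.ball_mem_nhds (0 : ℝ) hpr.r_pos] with y hy
    have hsum := hpr.hasSum_iteratedFDeriv hy
    have hzero : ∀ n : ℕ, n ≠ 0 →
        ((n.factorial : ℝ)⁻¹ • iteratedFDeriv ℝ n h₁ 0 fun _ => y) = 0 := by
      intro n hn
      rw [iteratedFDeriv_apply_eq_iteratedDeriv_mul_prod, hders n (Nat.one_le_iff_ne_zero.2 hn),
        smul_zero, smul_zero]
    have hsingle : HasSum (fun n : ℕ => (n.factorial : ℝ)⁻¹ • iteratedFDeriv ℝ n h₁ 0 fun _ => y)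
        ((Nat.factorial 0 : ℝ)⁻¹ • iteratedFDeriv ℝ 0 h₁ 0 fun _ => y) := hasSum_single 0 hzero
    have := hsum.unique hsingle
    simpa [iteratedFDeriv_zero_apply] using this
end

section
/- For α > 0 irrational, there is no pair of real analytic functions h₁, h₂ defined on neighborhoods of 0 in ℝ, with h₁ nonconstant, such that h₁(t) = h₂(t^α) for all sufficiently small t > 0. -/
/-!
A nonconstant analytic `h₁` satisfies `h₁ t - h₁ 0 = t ^ n u(t)` with `n ≥ 1` and `u 0 ≠ 0`.
By the identity theorem `h₂` cannot be locally constant either, so likewise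
`h₂ s - h₂ 0 = s ^ m v(s)` with `m ≥ 1` and `v 0 ≠ 0`. Then `t ^ n u(t) = t ^ (α m) v(t ^ α)`
for small `t > 0`, and comparing the rates at which both sides vanish forces `n = α m`,
making `α` rational.
-/

open Set Filter Topology

lemma Real.tendsto_rpow_nhdsGT_zero {a : ℝ} (ha : 0 < a) :
    Tendsto (fun t : ℝ => t ^ a) (𝓝[>] 0) (𝓝 0) := by
  have h := (Real.continuousAt_rpow_const 0 a (Or.inr ha.le)).tendsto
  rw [Real.zero_rpow ha.ne'] at h
  exact h.mono_left nhdsWithin_le_nhds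

lemma eq_zero_of_rpow_mul_eventuallyEq {a b c d : ℝ} {u v : ℝ → ℝ} (hab : a < b)
    (hu : Tendsto u (𝓝[>] 0) (𝓝 c)) (hv : Tendsto v (𝓝[>] 0) (𝓝 d))
    (h : ∀ᶠ t in 𝓝[>] 0, t ^ a * u t = t ^ b * v t) : c = 0 := by
  have hquot : ∀ᶠ t in 𝓝[>] 0, u t = t ^ (b - a) * v t := by
    filter_upwards [h, self_mem_nhdsWithin] with t ht (htpos : 0 < t)
    have hne : t ^ a ≠ 0 := (Real.rpow_pos_of_pos htpos a).ne'
    rw [Real.rpow_sub htpos, div_mul_eq_mul_div, eq_div_iff hne, mul_comm, ht]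
  have hlim : Tendsto (fun t => t ^ (b - a) * v t) (𝓝[>] 0) (𝓝 (0 * d)) :=
    (Real.tendsto_rpow_nhdsGT_zero (sub_pos.2 hab)).mul hv
  rw [zero_mul] at hlim
  exact tendsto_nhds_unique (hu.congr' hquot) hlim

lemma rpow_exponent_eq_of_eventuallyEq {a b c d : ℝ} {u v : ℝ → ℝ}
    (hu : Tendsto u (𝓝[>] 0) (𝓝 c)) (hv : Tendsto v (𝓝[>] 0) (𝓝 d)) (hc : c ≠ 0) (hd : d ≠ 0)
    (h : ∀ᶠ t in 𝓝[>] 0, t ^ a * u t = t ^ b * v t) : a = b := by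
  rcases lt_trichotomy a b with hab | hab | hab
  · exact absurd (eq_zero_of_rpow_mul_eventuallyEq hab hu hv h) hc
  · exact hab
  · exact absurd (eq_zero_of_rpow_mul_eventuallyEq hab hv hu (h.mono fun _ => Eq.symm)) hd

lemma AnalyticAt.eventually_eq_of_eventually_nhdsGT {E : Type*} [NormedAddCommGroup E]
    [NormedSpace ℝ E] {f : ℝ → E} {x : ℝ} {c : E} (hf : AnalyticAt ℝ f x)
    (h : ∀ᶠ t in 𝓝[>] x, f t = c) : ∀ᶠ t in 𝓝 x, f t = c :=
  (hf.frequently_eq_iff_eventually_eq analyticAt_const).1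
    (h.frequently.filter_mono (nhdsGT_le_nhdsNE x))

lemma AnalyticAt.exists_eventually_eq_add_pow_smul {𝕜 E : Type*} [NontriviallyNormedField 𝕜]
    [NormedAddCommGroup E] [NormedSpace 𝕜 E] {f : 𝕜 → E} {z₀ : 𝕜} (hf : AnalyticAt 𝕜 f z₀)
    (hnc : ¬ ∀ᶠ z in 𝓝 z₀, f z = f z₀) :
    ∃ n : ℕ, 0 < n ∧ ∃ g : 𝕜 → E, AnalyticAt 𝕜 g z₀ ∧ g z₀ ≠ 0 ∧
      ∀ᶠ z in 𝓝 z₀, f z = f z₀ + (z - z₀) ^ n • g z := by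
  have hord : analyticOrderAt (f · - f z₀) z₀ ≠ ⊤ := by
    simpa [analyticOrderAt_eq_top, sub_eq_zero] using hnc
  obtain ⟨n, hn⟩ := ENat.ne_top_iff_exists.1 hord
  obtain ⟨g, hg, hg₀, hfg⟩ := (hf.sub analyticAt_const).analyticOrderAt_eq_natCast.1 hn.symm
  have hn₀ : n ≠ 0 := by
    rintro rfl
    have h₀ : 0 = g z₀ := by simpa using hfg.self_of_nhds
    exact hg₀ h₀.symm
  refine ⟨n, Nat.pos_of_ne_zero hn₀, g, hg, hg₀, ?_⟩
  filter_upwards [hfg] with z hz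
  rw [← hz, Pi.sub_apply, add_sub_cancel]

/-- For α > 0 irrational, there is no pair of real analytic functions h₁, h₂
near 0 with h₁ nonconstant such that h₁(t) = h₂(t^α) for small t > 0. -/
theorem no_analytic_pair_for_irrational_power
    (α : ℝ) (hα : 0 < α) (hirr : Irrational α) :
    ¬ ∃ (h₁ h₂ : ℝ → ℝ), AnalyticAt ℝ h₁ 0 ∧ AnalyticAt ℝ h₂ 0 ∧
      (∃ δ > (0 : ℝ), ∀ t ∈ Ioo (0 : ℝ) δ, h₁ t = h₂ (t ^ α)) ∧
      ¬ (∀ᶠ t in nhds (0 : ℝ), h₁ t = h₁ 0) := by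
  rintro ⟨h₁, h₂, hh₁, hh₂, ⟨δ, hδ, hEq⟩, hnc₁⟩
  have hpow := Real.tendsto_rpow_nhdsGT_zero hα
  have hEq' : ∀ᶠ t in 𝓝[>] 0, h₁ t = h₂ (t ^ α) :=
    eventually_of_mem (Ioo_mem_nhdsGT hδ) hEq
  have hval : h₁ 0 = h₂ 0 :=
    tendsto_nhds_unique ((hh₁.continuousAt.tendsto.mono_left nhdsWithin_le_nhds).congr' hEq')
      (hh₂.continuousAt.tendsto.comp hpow)
  have hnc₂ : ¬ ∀ᶠ s in 𝓝 0, h₂ s = h₂ 0 := fun hconst =>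
    hnc₁ <| hh₁.eventually_eq_of_eventually_nhdsGT <| by
      filter_upwards [hEq', hpow.eventually hconst] with t ht hconst_t
      rw [ht, hconst_t, hval]
  obtain ⟨n, -, u, hu, hu₀, hh₁u⟩ := hh₁.exists_eventually_eq_add_pow_smul hnc₁
  obtain ⟨m, hm, v, hv, hv₀, hh₂v⟩ := hh₂.exists_eventually_eq_add_pow_smul hnc₂
  have hexp : (n : ℝ) = α * m := by
    refine rpow_exponent_eq_of_eventuallyEq (hu.continuousAt.tendsto.mono_left nhdsWithin_le_nhds)
      (hv.continuousAt.tendsto.comp hpow) hu₀ hv₀ ?_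
    filter_upwards [hEq', hh₁u.filter_mono nhdsWithin_le_nhds, hpow.eventually hh₂v,
      self_mem_nhdsWithin] with t ht htu htv (htpos : 0 < t)
    have hdiff := htu.symm.trans (ht.trans htv)
    rw [Real.rpow_natCast, Real.rpow_mul htpos.le, Real.rpow_natCast]
    simpa [hval] using hdiff
  have hm' : (m : ℝ) ≠ 0 := by exact_mod_cast hm.ne'
  exact hirr ⟨n / m, by push_cast; rw [hexp, mul_div_cancel_right₀ _ hm']⟩
end

section
/- Let ψ(t) = t·exp(−1/t) for t > 0 and suppose h₂ is real analytic at 0 with power series h₂(s) = Σ a_k s^k. Then for every n ≥ 1, the n-th derivative of t ↦ h₂(ψ(t)) tends to 0 as t → 0⁺. -/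
/-!
Replacing `exp (-1 / t)` by `expNegInvGlue t`, which agrees with it for `t > 0` and vanishes for
`t ≤ 0`, extends `t ↦ h₂ (t * exp (-1 / t))` from `(0, ∞)` to a function that is `C^n` at `0` and
constant on `(-∞, 0]`. For `n ≥ 1` its `n`-th derivative is continuous at `0` and vanishes to the
left of `0`, so it vanishes at `0`; hence it tends to `0` from the right, where it coincides with
the `n`-th derivative of the original function.
-/

open Set Filter Topology

section

variable {𝕜 F : Type*} [NontriviallyNormedField 𝕜] [NormedAddCommGroup F] [NormedSpace 𝕜 F]

theorem ContDiffAt.continuousAt_iteratedDeriv {f : 𝕜 → F} {x : 𝕜} {n : WithTop ℕ∞} {k : ℕ}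
    (hf : ContDiffAt 𝕜 n f x) (hk : k ≤ n) : ContinuousAt (iteratedDeriv k f) x := by
  rw [iteratedDeriv_eq_equiv_comp]
  exact (ContinuousMultilinearMap.piFieldEquiv 𝕜 (Fin k) F).symm.continuous.continuousAt.comp
    (hf.continuousAt_iteratedFDeriv hk)

theorem iteratedDeriv_eventuallyEq_zero_of_eventuallyEq_const {f : 𝕜 → F} {a : 𝕜} {c : F}
    {s : Set 𝕜} {n : ℕ} (hn : n ≠ 0) (hs : IsOpen s) (hc : f =ᶠ[𝓝[s] a] fun _ => c) :
    iteratedDeriv n f =ᶠ[𝓝[s] a] 0 := by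
  rw [EventuallyEq, ← eventually_eventually_nhdsWithin] at hc
  filter_upwards [hc, self_mem_nhdsWithin] with t ht hts
  rw [hs.nhdsWithin_eq hts] at ht
  rw [EventuallyEq.iteratedDeriv_eq n (g := fun _ => c) ht, iteratedDeriv_const, if_neg hn,
    Pi.zero_apply]

end

theorem tendsto_iteratedDeriv_nhds_zero_of_eventuallyEq_const_nhdsLT {F : Type*}
    [NormedAddCommGroup F] [NormedSpace ℝ F] {f : ℝ → F} {a : ℝ} {c : F} {n : ℕ} (hn : n ≠ 0)
    (hf : ContDiffAt ℝ n f a) (hc : f =ᶠ[𝓝[<] a] fun _ => c) :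
    Tendsto (iteratedDeriv n f) (𝓝 a) (𝓝 0) := by
  have hcont := (hf.continuousAt_iteratedDeriv le_rfl).tendsto
  have hzero : iteratedDeriv n f a = 0 :=
    tendsto_nhds_unique (hcont.mono_left nhdsWithin_le_nhds) <| tendsto_const_nhds.congr'
      (iteratedDeriv_eventuallyEq_zero_of_eventuallyEq_const hn isOpen_Iio hc).symm
  rwa [hzero] at hcont

theorem eqOn_exp_neg_one_div_expNegInvGlue :
    EqOn (fun t => Real.exp (-1 / t)) expNegInvGlue (Ioi 0) := fun t ht => by
  simp [expNegInvGlue, not_le.2 (mem_Ioi.1 ht), neg_div]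

/-- If h₂ is real analytic at 0 and ψ(t) = t·exp(−1/t), then for every n ≥ 1
the n-th derivative of h₂ ∘ ψ tends to 0 as t → 0⁺. -/
theorem comp_deriv_tendsto_zero
    (h₂ : ℝ → ℝ) (hh₂ : AnalyticAt ℝ h₂ 0) (n : ℕ) (hn : 1 ≤ n) :
    Tendsto (iteratedDeriv n (fun t : ℝ => h₂ (t * Real.exp (-1 / t))))
      (nhdsWithin 0 (Ioi 0)) (nhds 0) := by
  set F : ℝ → ℝ := fun t => h₂ (t * expNegInvGlue t)
  have hF : ContDiffAt ℝ n F 0 := by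
    refine ContDiffAt.comp (g := h₂) 0 ?_ (contDiff_id.mul expNegInvGlue.contDiff).contDiffAt
    simpa using hh₂.contDiffAt
  have hF_const : F =ᶠ[𝓝[<] 0] fun _ => h₂ 0 :=
    eventually_nhdsWithin_of_forall fun t ht => by
      simp [F, expNegInvGlue.zero_of_nonpos (le_of_lt ht)]
  have hF_eq : EqOn (fun t => h₂ (t * Real.exp (-1 / t))) F (Ioi 0) := fun t ht => by
    simp only [F, eqOn_exp_neg_one_div_expNegInvGlue ht]
  refine ((tendsto_iteratedDeriv_nhds_zero_of_eventuallyEq_const_nhdsLT (by omega) hF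
    hF_const).mono_left nhdsWithin_le_nhds).congr' ?_
  exact (hF_eq.iteratedDeriv_of_isOpen isOpen_Ioi n).eventuallyEq_nhdsWithin.symm
end
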